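/- Let B be a complete Boolean algebra and δ a regular cardinal. Then B satisfies the δ-chain condition (every antichain of pairwise-incompatible nonzero elements has cardinality < δ) if and only if the induced realizability algebra A_B satisfies the δ-chain condition: there exists a realizer p with τ(p) = 1 such that for every δ-sequence of terms ⟨u_β : β < δ⟩, every term t and stack π, if τ(t) ∧ τ(u_γ) ∧ τ(u_β) ∧ τ(π) = 0 for all γ < β < δ, then there exists β < δ with τ(p) ∧ τ(t) ∧ τ(u_β) ∧ τ(π) = 0. -/

import Mathlib

namespace Kriv

/- λc-terms and stacks over a Boolean algebra `B`: there is a stack bottom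
`ω_b` for every `b ∈ B`, and no special instructions. -/
mutual
inductive BTm (B : Type) : Type where
  | var : ℕ → BTm B
  | app : BTm B → BTm B → BTm B
  | lam : ℕ → BTm B → BTm B
  | cc : BTm B
  | cont : BStack B → BTm B
inductive BStack (B : Type) : Type where
  | bottom : B → BStack B
  | cons : BTm B → BStack B → BStack B
end

variable {B : Type} [CompleteBooleanAlgebra B]

/- The valuation τ from terms and stacks to `B`. -/
mutual
def tauT : BTm B → B
  | .var _ => ⊤
  | .app t s => tauT t ⊓ tauT s
  | .lam _ t => tauT t
  | .cc => ⊤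
  | .cont π => tauS π
def tauS : BStack B → B
  | .bottom b => b
  | .cons t π => tauT t ⊓ tauS π
end

/-- `t` contains no continuation constant. -/
def NoCont : BTm B → Prop
  | .var _ => True
  | .app t s => NoCont t ∧ NoCont s
  | .lam _ t => NoCont t
  | .cc => True
  | .cont _ => False

/-- `t` is closed relative to the list `bv` of bound variables (continuation
constants hold closed stacks, so they are treated as closed). -/
def ClosedAux : List ℕ → BTm B → Prop
  | bv, .var x => x ∈ bv
  | bv, .app t s => ClosedAux bv t ∧ ClosedAux bv s
  | bv, .lam x t => ClosedAux (x :: bv) t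
  | _, .cc => True
  | _, .cont _ => True

/-- A realizer: a closed term with no continuation constant. -/
def IsRealizer (t : BTm B) : Prop := ClosedAux [] t ∧ NoCont t

/-! Both chain conditions say that every δ-indexed family of pairwise disjoint elements of `B`
contains `⊥`. For `B` itself: such a family avoiding `⊥` is injective, so its range is an antichain
of cardinality δ. For `A_B`: the values `τ(t) ⊓ τ(u_β) ⊓ τ(π)` form such a family, and conversely
every family `g` arises in this way from the terms `k_{ω_{g β}}`; the realizer `λx.x` has
τ-value `⊤`. -/

open Cardinal Function

theorem mk_subtype_lt_ord (δ : Cardinal.{u}) :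
    #{β : Ordinal.{u} // β < δ.ord} = lift.{u + 1} δ :=
  (mk_Iio_ordinal δ.ord).trans (by rw [card_ord])

def ChainCondition (α : Type u) [Lattice α] [OrderBot α] (δ : Cardinal.{u}) : Prop :=
  ∀ A : Set α, (∀ a ∈ A, a ≠ ⊥) → (∀ a ∈ A, ∀ b ∈ A, a ≠ b → a ⊓ b = ⊥) → #A < δ

theorem chainCondition_iff_pairwise_disjoint {α : Type u} [Lattice α] [OrderBot α]
    {δ : Cardinal.{u}} {ι : Type v} (hι : lift.{u} #ι = lift.{v} δ) :
    ChainCondition α δ ↔ ∀ g : ι → α, Pairwise (Disjoint on g) → ∃ i, g i = ⊥ := by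
  constructor
  · intro hcc g hg
    by_contra! hne
    have hinj : Injective g := fun i j hij => by
      by_contra h
      exact hne j (disjoint_self.mp (by simpa only [onFun, hij] using hg h))
    have hlt := hcc (Set.range g) (by rintro _ ⟨i, rfl⟩; exact hne i)
      (fun a ha b hb hab => disjoint_iff.mp (hg.range_pairwise ha hb hab))
    have hmk : lift.{v} #(Set.range g) = lift.{v} δ := by
      rw [mk_range_eq_of_injective hinj, hι]
    exact hlt.ne (lift_inj.mp hmk)
  · intro h A hnz hA
    by_contra! hle
    obtain ⟨f⟩ : Nonempty (ι ↪ A) := by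
      rw [← lift_mk_le', hι]
      exact lift_le.mpr hle
    obtain ⟨i, hi⟩ := h (fun i => f i) fun i j hij =>
      disjoint_iff.mpr (hA _ (f i).2 _ (f j).2 (Subtype.val_injective.ne (f.injective.ne hij)))
    exact hnz _ (f i).2 hi

def RealizabilityChainCondition (B : Type) [CompleteBooleanAlgebra B] (ι : Type*) [LT ι] :
    Prop :=
  ∃ p : BTm B, IsRealizer p ∧ tauT p = ⊤ ∧
    ∀ (u : ι → BTm B) (t : BTm B) (π : BStack B),
      (∀ γ β, γ < β → tauT t ⊓ tauT (u γ) ⊓ tauT (u β) ⊓ tauS π = ⊥) →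
      ∃ β, tauT p ⊓ tauT t ⊓ tauT (u β) ⊓ tauS π = ⊥

theorem realizabilityChainCondition_iff {ι : Type*} [LinearOrder ι] :
    RealizabilityChainCondition B ι ↔
      ∀ g : ι → B, Pairwise (Disjoint on g) → ∃ i, g i = ⊥ := by
  constructor
  · rintro ⟨p, -, hp, hcc⟩ g hg
    obtain ⟨i, hi⟩ := hcc (fun i => .cont (.bottom (g i))) .cc (.bottom ⊤) fun γ β hγβ => by
      simpa [tauT, tauS, disjoint_iff] using (pairwise_disjoint_on g).mp hg hγβ
    exact ⟨i, by simpa [tauT, tauS, hp] using hi⟩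
  · refine fun h => ⟨.lam 0 (.var 0), ⟨by simp [ClosedAux], trivial⟩, rfl, fun u t π hu => ?_⟩
    obtain ⟨β, hβ⟩ := h (fun β => tauT t ⊓ tauT (u β) ⊓ tauS π) <|
      (pairwise_disjoint_on _).mpr fun γ β hγβ => disjoint_iff.mpr <| by
        rw [← hu γ β hγβ, ← inf_inf_distrib_right, ← inf_inf_distrib_left, ← inf_assoc]
    exact ⟨β, by simpa [tauT, inf_assoc] using hβ⟩

/-- a complete Boolean algebra `B` satisfies the δ-chain
condition (every set of pairwise-incompatible nonzero elements has cardinality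
`< δ`) iff the induced realizability algebra `A_B` (whose pole is
`{t ⋆ π : τ(t) ⊓ τ(π) = ⊥}`) satisfies the δ-chain condition: there is a
realizer `p` with `τ(p) = ⊤` such that for every δ-sequence of terms
`⟨u_β : β < δ⟩`, every term `t` and stack `π`, if
`τ(t) ⊓ τ(u_γ) ⊓ τ(u_β) ⊓ τ(π) = ⊥` for all `γ < β < δ`, then there is
`β < δ` with `τ(p) ⊓ τ(t) ⊓ τ(u_β) ⊓ τ(π) = ⊥`. -/
theorem boolean_cc_iff_algebra_cc (B : Type) [CompleteBooleanAlgebra B]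
    (δ : Cardinal.{0}) (hδ : δ.IsRegular) :
    (∀ A : Set B, (∀ a ∈ A, a ≠ ⊥) →
        (∀ a ∈ A, ∀ b ∈ A, a ≠ b → a ⊓ b = ⊥) → Cardinal.mk A < δ) ↔
      ∃ p : BTm B, IsRealizer p ∧ tauT p = ⊤ ∧
        ∀ (u : {β : Ordinal.{0} // β < δ.ord} → BTm B) (t : BTm B)
          (π : BStack B),
          (∀ γ β, γ < β → tauT t ⊓ tauT (u γ) ⊓ tauT (u β) ⊓ tauS π = ⊥) →
          ∃ β, tauT p ⊓ tauT t ⊓ tauT (u β) ⊓ tauS π = ⊥ :=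
  (chainCondition_iff_pairwise_disjoint (by simp [mk_subtype_lt_ord])).trans
    realizabilityChainCondition_iff.symm

end Kriv
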